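/- Let A be an n×n positive definite Hermitian matrix (n ≥ 1). Then tr(A⁻¹) ≤ (1/(n-1)!) · (tr A)^(n-1) / det A. -/

import Mathlib

/-!
In an eigenbasis of `A` the claim becomes an inequality between the eigenvalues `λᵢ > 0`:
`(∑ λᵢ⁻¹) ∏ λᵢ = ∑ᵢ ∏_{j ≠ i} λⱼ` is bounded by the elementary symmetric function `e_{n-1}(λ)`,
and `k! e_k(λ) ≤ (∑ λᵢ)^k`. The latter follows by adjoining one variable `a` at a time:
`e_{k+1}` gains `a e_k`, while `(T + a)^{k+1}` gains at least `(k + 1) T^k a` by Bernoulli's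
inequality.
-/

open Finset Nat

namespace Multiset

variable {R : Type*} [CommSemiring R]

theorem esymm_cons_succ (a : R) (s : Multiset R) (k : ℕ) :
    (a ::ₘ s).esymm (k + 1) = s.esymm (k + 1) + a * s.esymm k := by
  simp [esymm, sum_map_mul_left]

theorem factorial_mul_esymm_le_sum_pow [PartialOrder R] [IsOrderedRing R] {s : Multiset R}
    (hs : ∀ a ∈ s, 0 ≤ a) (k : ℕ) : (k ! : R) * s.esymm k ≤ s.sum ^ k := by
  induction s using Multiset.induction_on generalizing k with
  | empty => cases k <;> simp [esymm, powersetCard_zero_right]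
  | cons a s ih =>
    have ha : 0 ≤ a := hs a (mem_cons_self a s)
    have hs' : ∀ b ∈ s, 0 ≤ b := fun b hb => hs b (mem_cons_of_mem hb)
    have hsum : 0 ≤ s.sum := sum_nonneg hs'
    cases k with
    | zero => simp [esymm]
    | succ k =>
      calc ((k + 1)! : R) * (a ::ₘ s).esymm (k + 1)
          = (k + 1)! * s.esymm (k + 1) + (k + 1) * a * (k ! * s.esymm k) := by
            rw [esymm_cons_succ, factorial_succ]; push_cast; ring
        _ ≤ s.sum ^ (k + 1) + (k + 1) * a * s.sum ^ k := by
            have hka : 0 ≤ ((k : R) + 1) * a :=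
              mul_nonneg (add_nonneg k.cast_nonneg zero_le_one) ha
            exact add_le_add (ih hs' _) (mul_le_mul_of_nonneg_left (ih hs' _) hka)
        _ ≤ (s.sum + a) ^ (k + 1) := by
            simpa [mul_right_comm] using
              pow_add_mul_le_add_pow_of_sq_nonneg hsum (pow_nonneg ha 2)
                (pow_nonneg (add_nonneg hsum ha) 2)
                (add_nonneg (mul_nonneg zero_le_two hsum) ha) (k + 1)
        _ = (a ::ₘ s).sum ^ (k + 1) := by rw [sum_cons, add_comm]

end Multiset

namespace Finset

variable {ι : Type*} [DecidableEq ι]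

theorem sum_inv_mul_prod {K : Type*} [Field K] (s : Finset ι) {x : ι → K}
    (hx : ∀ i ∈ s, x i ≠ 0) :
    (∑ i ∈ s, (x i)⁻¹) * ∏ i ∈ s, x i = ∑ i ∈ s, ∏ j ∈ s.erase i, x j := by
  rw [sum_mul]
  refine sum_congr rfl fun i hi => ?_
  rw [← mul_prod_erase s x hi, inv_mul_cancel_left₀ (hx i hi)]

theorem sum_prod_erase_le_esymm {R : Type*} [CommSemiring R] [PartialOrder R] [IsOrderedRing R]
    (s : Finset ι) {x : ι → R} (hx : ∀ i ∈ s, 0 ≤ x i) :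
    ∑ i ∈ s, ∏ j ∈ s.erase i, x j ≤ (s.val.map x).esymm (#s - 1) := by
  rw [esymm_map_val,
    ← sum_image (f := fun t => ∏ j ∈ t, x j) fun i hi j _ h => (erase_inj s hi).1 h]
  refine sum_le_sum_of_subset_of_nonneg (fun t ht => ?_) fun t ht _ => ?_
  · obtain ⟨i, hi, rfl⟩ := mem_image.1 ht
    exact mem_powersetCard.2 ⟨erase_subset i s, card_erase_of_mem hi⟩
  · exact prod_nonneg fun j hj => hx j ((mem_powersetCard.1 ht).1 hj)

theorem sum_inv_le_sum_pow_div_prod {K : Type*} [Field K] [LinearOrder K] [IsStrictOrderedRing K]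
    (s : Finset ι) {x : ι → K} (hx : ∀ i ∈ s, 0 < x i) :
    ∑ i ∈ s, (x i)⁻¹ ≤ 1 / ((#s - 1)! : K) * (∑ i ∈ s, x i) ^ (#s - 1) / ∏ i ∈ s, x i := by
  have hx₀ : ∀ i ∈ s, 0 ≤ x i := fun i hi => (hx i hi).le
  rw [le_div_iff₀ (prod_pos hx), sum_inv_mul_prod s fun i hi => (hx i hi).ne', one_div,
    inv_mul_eq_div, le_div_iff₀ (by positivity), mul_comm]
  calc ((#s - 1)! : K) * ∑ i ∈ s, ∏ j ∈ s.erase i, x j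
      ≤ (#s - 1)! * (s.val.map x).esymm (#s - 1) := by
        gcongr
        exact sum_prod_erase_le_esymm s hx₀
    _ ≤ (s.val.map x).sum ^ (#s - 1) :=
        Multiset.factorial_mul_esymm_le_sum_pow (by simpa using hx₀) _
    _ = (∑ i ∈ s, x i) ^ (#s - 1) := rfl

end Finset

namespace Matrix.IsHermitian

variable {𝕜 n : Type*} [RCLike 𝕜] [Fintype n] [DecidableEq n] {A : Matrix n n 𝕜}

theorem trace_cfc (hA : A.IsHermitian) (f : ℝ → ℝ) :
    (cfc f A).trace = ∑ i, (f (hA.eigenvalues i) : 𝕜) := by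
  rw [hA.cfc_eq, IsHermitian.cfc, Unitary.conjStarAlgAut_apply, trace_mul_cycle,
    Unitary.coe_star_mul_self, one_mul, trace_diagonal]
  rfl

theorem trace_inv (hA : A.IsHermitian) (hA' : IsUnit A) :
    A⁻¹.trace = ∑ i, ((hA.eigenvalues i)⁻¹ : 𝕜) := by
  rw [nonsing_inv_eq_ringInverse, ← cfc_ringInverse_id (R := ℝ) A hA' hA.isSelfAdjoint,
    hA.trace_cfc]
  simp

end Matrix.IsHermitian

theorem trace_inv_le_general (n : ℕ) (A : Matrix (Fin n) (Fin n) ℝ)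
    (hA : A.PosDef) :
    Matrix.trace A⁻¹ ≤ (1 / (Nat.factorial (n - 1) : ℝ)) * (Matrix.trace A) ^ (n - 1) / A.det := by
  rw [hA.1.trace_inv hA.isUnit, hA.1.trace_eq_sum_eigenvalues, hA.1.det_eq_prod_eigenvalues]
  simpa using sum_inv_le_sum_pow_div_prod univ fun i _ => hA.eigenvalues_pos i

/-- For an n×n positive definite (symmetric) matrix A (n ≥ 1),
tr(A⁻¹) ≤ (1/(n-1)!) · (tr A)^(n-1) / det A. -/
theorem trace_inv_le (n : ℕ) (hn : 1 ≤ n) (A : Matrix (Fin n) (Fin n) ℝ)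
    (hA : A.PosDef) :
    Matrix.trace A⁻¹ ≤ (1 / (Nat.factorial (n - 1) : ℝ)) * (Matrix.trace A) ^ (n - 1) / A.det :=
  trace_inv_le_general n A hA
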